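/- arXiv:2601.11799 — 2 statements merged into one kernel-verified Lean document; each statement's English description precedes it below -/
import Mathlib

section
/- Let C⋆ > 0 be a constant such that for all N the integer A_N = a p_N² + b p_N q_N + c q_N² satisfies |A_N| ≤ C⋆ H² 3^{N−k} whenever θ_N ∈ R is followed by an L-run of length k. Fix T > 0 and set U_T := ⌈C⋆ · 3^{−T}⌉. Let α be a quadratic irrational with minimal polynomial f(x) = ax² + bx + c of height H. If N is a transition time with θ_N ∈ R whose subsequent L-run has length k ≥ N + 2 log₃ H + T, then |A_N| ≤ U_T; equivalently, (p, n) = (p_N, N+1) solves a p² + b p 3^n + c 3^{2n} = u for some integer u with 0 < |u| ≤ U_T. Moreover, for each such u one has the identity (2ap + b·3^n)² − Δ_f · 3^{2n} = 4au, where Δ_f = b² − 4ac. -/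
/-- θ_n(α) = {3^n α}, the fractional part of 3^n α. -/
noncomputable def theta (α : ℝ) (n : ℕ) : ℝ := Int.fract (3 ^ n * α)

/-- The numerator p_N = 3⌊3^N α⌋ + 2 of the digit-forced triadic rational. -/
noncomputable def pN (α : ℝ) (N : ℕ) : ℤ := 3 * ⌊(3 : ℝ) ^ N * α⌋ + 2

/-- A_N = a p_N² + b p_N q_N + c q_N² with q_N = 3^{N+1}. -/
noncomputable def AN (α : ℝ) (a b c : ℤ) (N : ℕ) : ℤ :=
  a * (pN α N) ^ 2 + b * (pN α N) * 3 ^ (N + 1) + c * (3 ^ (N + 1)) ^ 2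

/-! A_N is the value of the binary form a p² + b p q + c q² at an integer point with q ≠ 0,
so it is nonzero: f has no rational root once it has an irrational one. The assumed bound
C⋆ H² 3^{N-k} is at most C⋆ 3^{-T} as soon as k ≥ N + 2 log₃ H + T, and the integer |A_N|
then lies below the ceiling. -/

/-- A rational root `r` would make `α` equal to `r` or to the conjugate root `-b/a - r`. -/
theorem quadratic_ne_zero_of_irrational_root {a b c : ℤ} {α : ℝ} (hirr : Irrational α)
    (ha : a ≠ 0) (hroot : (a : ℝ) * α ^ 2 + b * α + c = 0) (r : ℚ) :
    (a : ℝ) * (r : ℝ) ^ 2 + b * r + c ≠ 0 := by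
  intro hr
  have hfac : (α - r) * (a * (α + r) + b) = 0 := by linear_combination hroot - hr
  rcases mul_eq_zero.mp hfac with h | h
  · exact hirr ⟨r, by linarith⟩
  · refine hirr ⟨-b / a - r, ?_⟩
    have haR : (a : ℝ) ≠ 0 := Int.cast_ne_zero.mpr ha
    push_cast
    field_simp
    linear_combination -h

theorem binary_form_ne_zero_of_irrational_root {a b c : ℤ} {α : ℝ} (hirr : Irrational α)
    (ha : a ≠ 0) (hroot : (a : ℝ) * α ^ 2 + b * α + c = 0) (p : ℤ) {q : ℤ} (hq : q ≠ 0) :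
    a * p ^ 2 + b * p * q + c * q ^ 2 ≠ 0 := by
  have hqR : (q : ℝ) ≠ 0 := Int.cast_ne_zero.mpr hq
  have hdehom : ((a * p ^ 2 + b * p * q + c * q ^ 2 : ℤ) : ℝ)
      = (q : ℝ) ^ 2 * ((a : ℝ) * ((p / q : ℚ) : ℝ) ^ 2 + b * ((p / q : ℚ) : ℝ) + c) := by
    push_cast
    field_simp
  intro h0
  rw [h0, Int.cast_zero, eq_comm, mul_eq_zero] at hdehom
  rcases hdehom with h | h
  · exact hqR (pow_eq_zero_iff two_ne_zero |>.mp h)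
  · exact quadratic_ne_zero_of_irrational_root hirr ha hroot _ h

theorem AN_ne_zero {α : ℝ} {a b c : ℤ} (hirr : Irrational α) (ha : a ≠ 0)
    (hroot : (a : ℝ) * α ^ 2 + b * α + c = 0) (N : ℕ) : AN α a b c N ≠ 0 :=
  binary_form_ne_zero_of_irrational_root hirr ha hroot _ (pow_ne_zero _ three_ne_zero)

theorem sq_mul_zpow_sub_le_rpow_neg {β H T : ℝ} (hβ : 1 < β) (hH : 0 < H) {N k : ℕ}
    (hdeep : (k : ℝ) ≥ N + 2 * Real.logb β H + T) :
    H ^ 2 * β ^ ((N : ℤ) - (k : ℤ)) ≤ β ^ (-T) := by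
  have hβ0 : 0 < β := by linarith
  have hHlog : H ^ 2 = β ^ (2 * Real.logb β H) := by
    rw [mul_comm, Real.rpow_mul hβ0.le, Real.rpow_logb hβ0 hβ.ne' hH, Real.rpow_two]
  have hzpow : β ^ ((N : ℤ) - (k : ℤ)) = β ^ ((N : ℝ) - k) := by
    rw [← Real.rpow_intCast]
    push_cast
    rfl
  rw [hHlog, hzpow, ← Real.rpow_add hβ0]
  exact Real.rpow_le_rpow_of_exponent_le hβ.le (by linarith)

theorem completing_square_binary_form {R : Type*} [CommRing R] (a b c p q : R) :
    (2 * a * p + b * q) ^ 2 - (b ^ 2 - 4 * a * c) * q ^ 2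
      = 4 * a * (a * p ^ 2 + b * p * q + c * q ^ 2) := by
  ring

theorem stmt10_general (α : ℝ) (a b c : ℤ) (H : ℕ)
    (hirr : Irrational α) (ha : a ≠ 0)
    (hroot : (a : ℝ) * α ^ 2 + (b : ℝ) * α + (c : ℝ) = 0)
    (hH : H = max a.natAbs (max b.natAbs c.natAbs))
    (Cs : ℝ) (hCs : 0 < Cs)
    (hCprop : ∀ (N k : ℕ),
      theta α N ∈ Set.Ico (2/3 : ℝ) 1 →
      (∀ j, 1 ≤ j → j ≤ k → theta α (N + j) ∈ Set.Ico (0 : ℝ) (1/3)) →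
      (|AN α a b c N| : ℝ) ≤ Cs * (H : ℝ) ^ 2 * (3 : ℝ) ^ ((N : ℤ) - (k : ℤ)))
    (T : ℝ)
    (N k : ℕ)
    (hR : theta α N ∈ Set.Ico (2/3 : ℝ) 1)
    (hrun : ∀ j, 1 ≤ j → j ≤ k → theta α (N + j) ∈ Set.Ico (0 : ℝ) (1/3))
    (hdeep : (k : ℝ) ≥ (N : ℝ) + 2 * Real.logb 3 (H : ℝ) + T) :
    |AN α a b c N| ≤ ⌈Cs * (3 : ℝ) ^ (-T)⌉ ∧
    (∃ u : ℤ, 0 < |u| ∧ |u| ≤ ⌈Cs * (3 : ℝ) ^ (-T)⌉ ∧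
      a * (pN α N) ^ 2 + b * (pN α N) * 3 ^ (N + 1) + c * 3 ^ (2 * (N + 1)) = u ∧
      (2 * a * (pN α N) + b * 3 ^ (N + 1)) ^ 2
          - (b ^ 2 - 4 * a * c) * 3 ^ (2 * (N + 1)) = 4 * a * u) := by
  have hHpos : (0 : ℝ) < H := by
    have : 0 < a.natAbs := Int.natAbs_pos.mpr ha
    exact_mod_cast (show 0 < H by omega)
  have hbound : (|AN α a b c N| : ℝ) ≤ Cs * (3 : ℝ) ^ (-T) :=
    (hCprop N k hR hrun).trans <| by
      rw [mul_assoc]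
      exact mul_le_mul_of_nonneg_left
        (sq_mul_zpow_sub_le_rpow_neg (by norm_num) hHpos hdeep) hCs.le
  have hceil : |AN α a b c N| ≤ ⌈Cs * (3 : ℝ) ^ (-T)⌉ := by
    exact_mod_cast hbound.trans (Int.le_ceil _)
  have hform : a * (pN α N) ^ 2 + b * (pN α N) * 3 ^ (N + 1) + c * 3 ^ (2 * (N + 1))
      = AN α a b c N := by
    rw [AN, pow_mul']
  refine ⟨hceil, AN α a b c N, abs_pos.mpr (AN_ne_zero hirr ha hroot N), hceil, hform, ?_⟩
  rw [← hform, pow_mul', completing_square_binary_form]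

/-- Deep blocks reduce to bounded-norm 3-power equations: if
|A_N| ≤ C⋆ H² 3^{N-k} holds whenever θ_N ∈ R is followed by an L-run of
length k, T > 0, U_T = ⌈C⋆ 3^{-T}⌉, and N is a transition time whose L-run
has length k ≥ N + 2log₃H + T, then |A_N| ≤ U_T; equivalently
(p,n) = (p_N, N+1) solves a p² + b p 3ⁿ + c 3²ⁿ = u for some 0 < |u| ≤ U_T,
and (2ap + b 3ⁿ)² - Δ_f 3²ⁿ = 4au with Δ_f = b² - 4ac. -/
theorem stmt10 (α : ℝ) (a b c : ℤ) (H : ℕ)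
    (hirr : Irrational α) (ha : a ≠ 0)
    (hroot : (a : ℝ) * α ^ 2 + (b : ℝ) * α + (c : ℝ) = 0)
    (hprim : Int.gcd a (Int.gcd b c) = 1)
    (hH : H = max a.natAbs (max b.natAbs c.natAbs))
    (Cs : ℝ) (hCs : 0 < Cs)
    (hCprop : ∀ (N k : ℕ),
      theta α N ∈ Set.Ico (2/3 : ℝ) 1 →
      (∀ j, 1 ≤ j → j ≤ k → theta α (N + j) ∈ Set.Ico (0 : ℝ) (1/3)) →
      (|AN α a b c N| : ℝ) ≤ Cs * (H : ℝ) ^ 2 * (3 : ℝ) ^ ((N : ℤ) - (k : ℤ)))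
    (T : ℝ) (hT : 0 < T)
    (N k : ℕ)
    (hR : theta α N ∈ Set.Ico (2/3 : ℝ) 1)
    (hL1 : theta α (N + 1) ∈ Set.Ico (0 : ℝ) (1/3))
    (hrun : ∀ j, 1 ≤ j → j ≤ k → theta α (N + j) ∈ Set.Ico (0 : ℝ) (1/3))
    (hmax : theta α (N + k + 1) ∉ Set.Ico (0 : ℝ) (1/3))
    (hdeep : (k : ℝ) ≥ (N : ℝ) + 2 * Real.logb 3 (H : ℝ) + T) :
    |AN α a b c N| ≤ ⌈Cs * (3 : ℝ) ^ (-T)⌉ ∧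
    (∃ u : ℤ, 0 < |u| ∧ |u| ≤ ⌈Cs * (3 : ℝ) ^ (-T)⌉ ∧
      a * (pN α N) ^ 2 + b * (pN α N) * 3 ^ (N + 1) + c * 3 ^ (2 * (N + 1)) = u ∧
      (2 * a * (pN α N) + b * 3 ^ (N + 1)) ^ 2
          - (b ^ 2 - 4 * a * c) * 3 ^ (2 * (N + 1)) = 4 * a * u) :=
  stmt10_general α a b c H hirr ha hroot hH Cs hCs hCprop T N k hR hrun hdeep
end

section
/- Let α be a quadratic irrational of height H with δ_𝒞(α) ≥ 0.02 and finite exit time. Suppose that the number of R-blocks in the orbit (θ_N) before exit — i.e. the number of indices n < exit(α) with θ_n ∈ R and (n = 0 or θ_{n−1} ∉ R) — is at most B₀ for an absolute constant B₀. Then there exist constants C₁, C₂ > 0 depending only on B₀ such that exit(α) ≤ C₁ log₃ H + C₂. -/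
open Finset Real

theorem abs_two_mul_add_le_of_quadratic {α : ℝ} {a b c : ℤ}
    (hroot : (a : ℝ) * α ^ 2 + b * α + c = 0) {H : ℝ} (ha : |(a : ℝ)| ≤ H)
    (hb : |(b : ℝ)| ≤ H) (hc : |(c : ℝ)| ≤ H) :
    |2 * a * α + b| ≤ 3 * H := by
  have hH : 0 ≤ H := (abs_nonneg _).trans ha
  have hdiscrim := discrim_eq_sq_of_quadratic_eq_zero (a := (a : ℝ)) (b := b) (c := c) (x := α)
    (by linear_combination hroot)
  apply abs_le_of_sq_le_sq _ (by positivity)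
  rw [← hdiscrim, discrim]
  have hb2 : (b : ℝ) ^ 2 ≤ H ^ 2 := sq_le_sq' (abs_le.mp hb).1 (abs_le.mp hb).2
  have hac : -(a * c : ℝ) ≤ H ^ 2 := by
    calc -(a * c : ℝ) ≤ |(a : ℝ)| * |(c : ℝ)| := by rw [← abs_mul]; exact neg_le_abs _
      _ ≤ H ^ 2 := by rw [sq]; exact mul_le_mul ha hc (abs_nonneg _) hH
  nlinarith

theorem one_le_mul_abs_sub_of_quadratic {α : ℝ} (hα : Irrational α) {a b c : ℤ} (ha0 : a ≠ 0)
    (hroot : (a : ℝ) * α ^ 2 + b * α + c = 0) {H : ℝ} (ha : |(a : ℝ)| ≤ H)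
    (hb : |(b : ℝ)| ≤ H) (hc : |(c : ℝ)| ≤ H) (p q : ℤ) (hq : 0 < q) :
    1 ≤ 4 * H * q * |q * α - p| := by
  have hq1 : (1 : ℝ) ≤ q := by exact_mod_cast hq
  have hH : 1 ≤ H := le_trans (by exact_mod_cast Int.one_le_abs ha0) ha
  rcases le_or_gt 1 |q * α - p| with hfar | hnear
  · nlinarith [mul_le_mul_of_nonneg_left hfar (by positivity : (0 : ℝ) ≤ 4 * H * q)]
  set N : ℤ := a * p ^ 2 + b * p * q + c * q ^ 2
  -- `N` is `q²` times the minimal polynomial evaluated at `p / q`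
  have hfactor : (N : ℝ) = (p - q * α) * (a * (p - q * α) + q * (2 * a * α + b)) := by
    simp only [N]; push_cast; linear_combination (q : ℝ) ^ 2 * hroot
  have hN : N ≠ 0 := by
    intro hN0
    rw [hN0, Int.cast_zero, eq_comm, mul_eq_zero] at hfactor
    have hq0 : (q : ℝ) ≠ 0 := by positivity
    rcases hfactor with h | h
    · refine (irrational_iff_ne_rational α).mp hα p q hq.ne' ?_
      field_simp; linarith
    · refine (irrational_iff_ne_rational α).mp hα (-(a * p + b * q)) (a * q)
        (mul_ne_zero ha0 hq.ne') ?_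
      push_cast; field_simp; linarith
  have hsecond : |a * (p - q * α) + q * (2 * a * α + b)| ≤ 4 * H * q := by
    have h2 := abs_two_mul_add_le_of_quadratic hroot ha hb hc
    calc _ ≤ |(a : ℝ)| * |p - q * α| + q * |2 * a * α + b| := by
          refine (abs_add_le _ _).trans ?_
          rw [abs_mul, abs_mul, abs_of_pos (by positivity : (0 : ℝ) < q)]
      _ ≤ H * 1 + q * (3 * H) := by
          rw [abs_sub_comm] at hnear
          gcongr
      _ ≤ 4 * H * q := by nlinarith
  calc (1 : ℝ) ≤ |(N : ℝ)| := by exact_mod_cast Int.one_le_abs hN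
    _ = |q * α - p| * |a * (p - q * α) + q * (2 * a * α + b)| := by
        rw [hfactor, abs_mul, abs_sub_comm]
    _ ≤ |q * α - p| * (4 * H * q) := by gcongr
    _ = 4 * H * q * |q * α - p| := by ring

theorem theta_nonneg (α : ℝ) (n : ℕ) : 0 ≤ theta α n := Int.fract_nonneg _

theorem theta_lt_one (α : ℝ) (n : ℕ) : theta α n < 1 := Int.fract_lt_one _

theorem theta_succ (α : ℝ) (n : ℕ) : theta α (n + 1) = Int.fract (3 * theta α n) := by
  rw [theta, theta, Int.fract_eq_fract]
  exact ⟨3 * ⌊(3 : ℝ) ^ n * α⌋, by rw [Int.fract]; push_cast; ring⟩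

theorem three_pow_mul_theta_of_forall_lt {α : ℝ} {s ℓ : ℕ}
    (hL : ∀ i < ℓ, theta α (s + i) < 1 / 3) : 3 ^ ℓ * theta α s = theta α (s + ℓ) := by
  induction ℓ with
  | zero => simp
  | succ ℓ ih =>
    have hlt := hL ℓ ℓ.lt_succ_self
    have hnonneg := theta_nonneg α (s + ℓ)
    rw [← add_assoc, theta_succ, Int.fract_eq_self.mpr ⟨by linarith, by linarith⟩,
      ← ih fun i hi => hL i (hi.trans ℓ.lt_succ_self), pow_succ]
    ring

theorem three_pow_mul_one_sub_theta_of_forall_ge {α : ℝ} {s ℓ : ℕ}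
    (hR : ∀ i < ℓ, 2 / 3 ≤ theta α (s + i)) :
    3 ^ ℓ * (1 - theta α s) = 1 - theta α (s + ℓ) := by
  induction ℓ with
  | zero => simp
  | succ ℓ ih =>
    have hge := hR ℓ ℓ.lt_succ_self
    have hlt := theta_lt_one α (s + ℓ)
    have hfract : Int.fract (3 * theta α (s + ℓ)) = 3 * theta α (s + ℓ) - 2 :=
      Int.fract_eq_iff.mpr ⟨by linarith, by linarith, 2, by push_cast; ring⟩
    rw [← add_assoc, theta_succ, hfract, pow_succ, mul_right_comm,
      ih fun i hi => hR i (hi.trans ℓ.lt_succ_self)]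
    ring

theorem natCast_le_add_logb_of_pow_mul_le_one {β Q x : ℝ} (hβ : 1 < β) {s ℓ : ℕ} (hx : 0 ≤ x)
    (hlower : 1 ≤ Q * β ^ s * x) (hupper : β ^ ℓ * x ≤ 1) : (ℓ : ℝ) ≤ s + logb β Q := by
  have hβ0 : 0 < β := by linarith
  have hQs : 0 < Q * β ^ s := by
    by_contra! hQs
    nlinarith [mul_nonpos_of_nonpos_of_nonneg hQs hx]
  have hQ : 0 < Q := (pos_iff_pos_of_mul_pos hQs).mpr (pow_pos hβ0 s)
  have hpow : β ^ ℓ ≤ Q * β ^ s := by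
    calc β ^ ℓ ≤ β ^ ℓ * (Q * β ^ s * x) := le_mul_of_one_le_right (pow_pos hβ0 ℓ).le hlower
      _ = Q * β ^ s * (β ^ ℓ * x) := by ring
      _ ≤ Q * β ^ s := mul_le_of_le_one_right hQs.le hupper
  calc (ℓ : ℝ) = logb β (β ^ ℓ) := by rw [logb_pow, logb_self_eq_one hβ, mul_one]
    _ ≤ logb β (Q * β ^ s) := logb_le_logb_of_le hβ (pow_pos hβ0 ℓ) hpow
    _ = s + logb β Q := by
        rw [logb_mul hQ.ne' (pow_pos hβ0 s).ne', logb_pow, logb_self_eq_one hβ, mul_one, add_comm]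

def RunLengthBound (p : ℕ → Prop) (e : ℕ) (K : ℝ) : Prop :=
  ∀ s ℓ, s + ℓ ≤ e → (∀ i < ℓ, p (s + i) ↔ p s) → (ℓ : ℝ) ≤ s + K

section RunCount

variable {p : ℕ → Prop} {e : ℕ} {K : ℝ}

theorem RunLengthBound.exists_run_end (hrun : RunLengthBound p e K) {s : ℕ} (hs : s < e) :
    ∃ t, s < t ∧ t ≤ e ∧ (t : ℝ) + K ≤ 2 * (s + K) ∧ (∀ i, s ≤ i → i < t → (p i ↔ p s)) ∧
      (t < e → (p t ↔ ¬ p s)) := by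
  classical
  have hex : ∃ ℓ, s + ℓ = e ∨ ¬ (p (s + ℓ) ↔ p s) := ⟨e - s, Or.inl (by omega)⟩
  have hspec := Nat.find_spec hex
  have hmin : ∀ i < Nat.find hex, p (s + i) ↔ p s := fun i hi => by
    simpa using (not_or.mp (Nat.find_min hex hi)).2
  have hpos : 0 < Nat.find hex := Nat.pos_of_ne_zero fun h0 => by
    rw [h0] at hspec; simp at hspec; omega
  have hle : s + Nat.find hex ≤ e := by
    have := Nat.find_min' hex (Or.inl (show s + (e - s) = e by omega)); omega
  refine ⟨s + Nat.find hex, by omega, hle, ?_, fun i hsi hit => ?_, fun hlt => ?_⟩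
  · have := hrun s _ hle hmin
    push_cast
    linarith
  · simpa [Nat.add_sub_cancel' hsi] using hmin (i - s) (by omega)
  · have := hspec.resolve_left hlt.ne
    tauto

theorem card_filter_le_add_one_le {S : Finset ℕ} {x s t : ℕ} (hx : x ∈ S) (hsx : s ≤ x)
    (hxt : x < t) : #{y ∈ S | t ≤ y} + 1 ≤ #{y ∈ S | s ≤ y} := by
  refine Finset.card_lt_card ⟨Finset.monotone_filter_right S fun y h => by omega, fun hsub => ?_⟩
  have := (Finset.mem_filter.mp (hsub (Finset.mem_filter.mpr ⟨hx, hsx⟩))).2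
  omega

/-- Each run at least doubles `s + K`; the exponent bounds the number of runs left after `s`,
since `p`-runs start at points of `S` and runs of `p` and `¬ p` alternate. -/
theorem RunLengthBound.add_le_two_pow_mul [DecidablePred p] (hrun : RunLengthBound p e K)
    (hK : 0 ≤ K) {S : Finset ℕ} (hS : ∀ n < e, p n → (n = 0 ∨ ¬ p (n - 1)) → n ∈ S)
    {s : ℕ} (hs : s ≤ e) (hstart : p s → s < e → s ∈ S) :
    (e : ℝ) + K ≤ 2 ^ (2 * #{x ∈ S | s ≤ x} + if p s then 0 else 1) * (s + K) := by
  have hsK : 0 ≤ (s : ℝ) + K := by positivity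
  rcases hs.eq_or_lt with rfl | hs
  · exact le_mul_of_one_le_left hsK (one_le_pow₀ one_le_two)
  obtain ⟨t, hst, hte, htK, hsame, hflip⟩ := hrun.exists_run_end hs
  have hcount : 1 ≤ 2 * #{x ∈ S | s ≤ x} + if p s then 0 else 1 := by
    by_cases hps : p s
    · have := card_filter_le_add_one_le (hstart hps hs) le_rfl hst
      simp only [hps, if_true]; omega
    · simp [hps]
  rcases hte.eq_or_lt with rfl | hte
  · calc (t : ℝ) + K ≤ 2 ^ 1 * (s + K) := by linarith
      _ ≤ _ := by gcongr; norm_num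
  have hstart_t : p t → t < e → t ∈ S := fun hpt _ =>
    hS t hte hpt <| Or.inr fun hprev =>
      (hflip hte).mp hpt ((hsame (t - 1) (by omega) (by omega)).mp hprev)
  have hdecrease : (2 * #{x ∈ S | t ≤ x} + if p t then 0 else 1) + 1 ≤
      2 * #{x ∈ S | s ≤ x} + if p s then 0 else 1 := by
    have hmono : #{x ∈ S | t ≤ x} ≤ #{x ∈ S | s ≤ x} :=
      Finset.card_le_card (Finset.monotone_filter_right S fun y h => by omega)
    by_cases hps : p s
    · have := card_filter_le_add_one_le (hstart hps hs) le_rfl hst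
      have hpt : ¬ p t := fun h => (hflip hte).mp h hps
      simp only [hps, hpt, if_true, if_false]; omega
    · have hpt : p t := (hflip hte).mpr hps
      simp only [hps, hpt, if_true, if_false]; omega
  calc (e : ℝ) + K ≤ 2 ^ (2 * #{x ∈ S | t ≤ x} + if p t then 0 else 1) * (t + K) :=
        hrun.add_le_two_pow_mul hK hS hte.le hstart_t
    _ ≤ 2 ^ (2 * #{x ∈ S | t ≤ x} + if p t then 0 else 1) * (2 * (s + K)) := by gcongr
    _ = 2 ^ ((2 * #{x ∈ S | t ≤ x} + if p t then 0 else 1) + 1) * (s + K) := by ring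
    _ ≤ _ := by gcongr; norm_num
termination_by e - s

theorem RunLengthBound.add_le_two_mul_four_pow_mul [DecidablePred p]
    (hrun : RunLengthBound p e K) (hK : 0 ≤ K) {S : Finset ℕ}
    (hS : ∀ n < e, p n → (n = 0 ∨ ¬ p (n - 1)) → n ∈ S) :
    (e : ℝ) + K ≤ 2 * 4 ^ #S * K := by
  have h := hrun.add_le_two_pow_mul hK hS (Nat.zero_le e) fun hp he => hS 0 he hp (Or.inl rfl)
  simp only [zero_le, Finset.filter_true, Nat.cast_zero, zero_add] at h
  have hexp : (2 * #S + if p 0 then 0 else 1) ≤ 2 * #S + 1 := by split_ifs <;> omega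
  calc (e : ℝ) + K ≤ 2 ^ (2 * #S + 1) * K := h.trans (by gcongr; norm_num)
    _ = 2 * 4 ^ #S * K := by rw [pow_succ, pow_mul]; ring

end RunCount

section Runs

variable {α Q : ℝ} (hα : ∀ p q : ℤ, 0 < q → 1 ≤ Q * q * |q * α - p|)
include hα

theorem one_le_mul_theta (s : ℕ) : 1 ≤ Q * 3 ^ s * theta α s := by
  have h := hα ⌊(3 : ℝ) ^ s * α⌋ (3 ^ s) (by positivity)
  push_cast at h
  rwa [Int.self_sub_floor, abs_of_nonneg (Int.fract_nonneg _)] at h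

theorem one_le_mul_one_sub_theta (s : ℕ) : 1 ≤ Q * 3 ^ s * (1 - theta α s) := by
  have h := hα (⌊(3 : ℝ) ^ s * α⌋ + 1) (3 ^ s) (by positivity)
  push_cast at h
  rwa [← sub_sub, Int.self_sub_floor, abs_sub_comm,
    abs_of_nonneg (sub_nonneg.mpr (Int.fract_lt_one _).le)] at h

theorem length_le_of_forall_theta_lt {s ℓ : ℕ} (hL : ∀ i < ℓ, theta α (s + i) < 1 / 3) :
    (ℓ : ℝ) ≤ s + logb 3 Q := by
  refine natCast_le_add_logb_of_pow_mul_le_one (by norm_num) (theta_nonneg α s)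
    (one_le_mul_theta hα s) ?_
  rw [three_pow_mul_theta_of_forall_lt hL]
  exact (theta_lt_one α _).le

theorem length_le_of_forall_theta_ge {s ℓ : ℕ} (hR : ∀ i < ℓ, 2 / 3 ≤ theta α (s + i)) :
    (ℓ : ℝ) ≤ s + logb 3 Q := by
  refine natCast_le_add_logb_of_pow_mul_le_one (by norm_num)
    (sub_nonneg.mpr (theta_lt_one α s).le) (one_le_mul_one_sub_theta hα s) ?_
  rw [three_pow_mul_one_sub_theta_of_forall_ge hR]
  exact sub_le_self _ (theta_nonneg α _)

theorem runLengthBound_theta {e : ℕ}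
    (hM : ∀ m, m < e → theta α m ∉ Set.Ico (1 / 3 : ℝ) (2 / 3)) :
    RunLengthBound (fun n => theta α n ∈ Set.Ico (2 / 3 : ℝ) 1) e (logb 3 Q) := by
  intro s ℓ hle hsame
  by_cases hR : theta α s ∈ Set.Ico (2 / 3 : ℝ) 1
  · exact length_le_of_forall_theta_ge hα fun i hi => ((hsame i hi).mpr hR).1
  · refine length_le_of_forall_theta_lt hα fun i hi => ?_
    have hnotR := mt (hsame i hi).mp hR
    have hnotM := hM (s + i) (by omega)
    simp only [Set.mem_Ico, not_and, not_lt] at hnotR hnotM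
    by_contra! h
    linarith [hnotR (hnotM h), theta_lt_one α (s + i)]

end Runs

theorem logb_three_four_mul_le {H : ℝ} (hH : 0 < H) : logb 3 (4 * H) ≤ logb 3 H + 2 := by
  calc logb 3 (4 * H) ≤ logb 3 (3 ^ 2 * H) := logb_le_logb_of_le (by norm_num) (by positivity)
        (by nlinarith)
    _ = logb 3 H + 2 := by
        rw [logb_mul (by norm_num) hH.ne', logb_pow, logb_self_eq_one (by norm_num)]; ring

/-- Conditional logarithmic exit bound under a uniform R-block count: for any
bound B₀ there exist constants C₁, C₂ > 0 (depending only on B₀) such that if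
α is a quadratic irrational of height H with δ_𝒞(α) ≥ 0.02 and finite exit
time E, and the number of R-blocks before exit (indices n < E with θ_n ∈ R
and (n = 0 or θ_{n-1} ∉ R)) is at most B₀, then E ≤ C₁ log₃ H + C₂. -/
theorem stmt18 (B₀ : ℕ) :
    ∃ C₁ C₂ : ℝ, 0 < C₁ ∧ 0 < C₂ ∧
      ∀ (α : ℝ) (a b c : ℤ) (H : ℕ),
        Irrational α → a ≠ 0 →
        (a : ℝ) * α ^ 2 + (b : ℝ) * α + (c : ℝ) = 0 →
        Int.gcd a (Int.gcd b c) = 1 →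
        H = max a.natAbs (max b.natAbs c.natAbs) →
        (∀ k : ℕ, k ≤ 9 → |Int.fract α - (k : ℝ) / 9| ≥ 0.02) →
        ∀ E : ℕ, 1 ≤ E →
          theta α (E - 1) ∈ Set.Ico (1/3 : ℝ) (2/3) →
          (∀ m, m < E - 1 → theta α m ∉ Set.Ico (1/3 : ℝ) (2/3)) →
          ∀ Rb : Finset ℕ,
            (∀ n, n ∈ Rb ↔ n < E ∧ theta α n ∈ Set.Ico (2/3 : ℝ) 1 ∧
              (n = 0 ∨ theta α (n - 1) ∉ Set.Ico (2/3 : ℝ) 1)) →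
            Rb.card ≤ B₀ →
            (E : ℝ) ≤ C₁ * Real.logb 3 (H : ℝ) + C₂ := by
  refine ⟨2 * 4 ^ B₀, 4 ^ (B₀ + 1) + 1, by positivity, by positivity, ?_⟩
  intro α a b c H hα ha hroot _ hH _ E hE _ hM Rb hRb hcard
  have ha' : a.natAbs ≤ H := hH ▸ le_max_left _ _
  have hb' : b.natAbs ≤ H := hH ▸ (le_max_left _ _).trans (le_max_right _ _)
  have hc' : c.natAbs ≤ H := hH ▸ (le_max_right _ _).trans (le_max_right _ _)
  have hcoeff : ∀ z : ℤ, z.natAbs ≤ H → |(z : ℝ)| ≤ H := fun z hz => by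
    rw [← Int.cast_abs, Int.abs_eq_natAbs]; exact_mod_cast hz
  have hH1 : (1 : ℝ) ≤ H := by exact_mod_cast (Int.natAbs_pos.mpr ha).trans_le ha'
  have hK : 0 ≤ logb 3 (4 * H) := logb_nonneg (by norm_num) (by linarith)
  have hliouville := one_le_mul_abs_sub_of_quadratic hα ha hroot
    (hcoeff a ha') (hcoeff b hb') (hcoeff c hc')
  have hbound := (runLengthBound_theta hliouville hM).add_le_two_mul_four_pow_mul hK
    fun n hn hR hprev => (hRb n).mpr ⟨by omega, hR, hprev⟩
  push_cast [Nat.cast_sub hE] at hbound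
  calc (E : ℝ) ≤ 2 * 4 ^ #Rb * logb 3 (4 * H) + 1 := by linarith
    _ ≤ 2 * 4 ^ B₀ * (logb 3 H + 2) + 1 := by
        gcongr
        · norm_num
        · exact logb_three_four_mul_le (by positivity)
    _ = 2 * 4 ^ B₀ * logb 3 H + (4 ^ (B₀ + 1) + 1) := by ring
end
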